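/- arXiv:2408.11329 — 2 statements merged into one kernel-verified Lean document; each statement's English description precedes it below -/
import Mathlib

section
/- The function G ↦ aᴴ G⁻¹ a is convex on the set of Hermitian positive definite n×n complex matrices, for any fixed vector a ∈ ℂ^n. -/
open Matrix Complex
open scoped ComplexOrder

theorem posDef_real_smul {n : ℕ} {t : ℝ} (ht : 0 < t) {A : Matrix (Fin n) (Fin n) ℂ}
    (hA : A.PosDef) : (t • A).PosDef := by
  have h : t • A = ((t : ℂ)) • A := by ext i j; simp [Complex.real_smul]
  rw [h]
  refine posDef_iff_dotProduct_mulVec.mpr ⟨?_, fun x hx => ?_⟩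
  · simp [Matrix.IsHermitian, conjTranspose_smul, hA.1.eq]
  · rw [smul_mulVec, dotProduct_smul, smul_eq_mul]
    exact mul_pos (by exact_mod_cast ht) (hA.dotProduct_mulVec_pos hx)

theorem key_ineq {n : ℕ} (a x : Fin n → ℂ) {H : Matrix (Fin n) (Fin n) ℂ} (hH : H.PosDef) :
    2 * (star a ⬝ᵥ x).re - (star x ⬝ᵥ H *ᵥ x).re ≤ (star a ⬝ᵥ H⁻¹ *ᵥ a).re := by
  have hu := hH.isUnit
  have hHinv : H * H⁻¹ = 1 := mul_nonsing_inv H (isUnit_iff_isUnit_det H |>.1 hu)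
  have hinvH : H⁻¹ * H = 1 := nonsing_inv_mul H (isUnit_iff_isUnit_det H |>.1 hu)
  set y : Fin n → ℂ := x - H⁻¹ *ᵥ a with hy
  have h0 : 0 ≤ (star y ⬝ᵥ H *ᵥ y).re := by
    have := hH.posSemidef.dotProduct_mulVec_nonneg y
    exact (Complex.le_def.mp this).1
  have hexp : star y ⬝ᵥ H *ᵥ y
      = star x ⬝ᵥ H *ᵥ x - star x ⬝ᵥ a - star a ⬝ᵥ x + star a ⬝ᵥ H⁻¹ *ᵥ a := by
    have hHy : H *ᵥ y = H *ᵥ x - a := by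
      rw [hy, mulVec_sub, mulVec_mulVec, hHinv, one_mulVec]
    have hstary : star y = star x - star (H⁻¹ *ᵥ a) := by
      rw [hy]; ext i; simp [Pi.sub_apply]
    have hterm : star (H⁻¹ *ᵥ a) ⬝ᵥ (H *ᵥ x) = star a ⬝ᵥ x := by
      rw [star_mulVec, ← dotProduct_mulVec, mulVec_mulVec, hH.1.inv.eq, hinvH, one_mulVec]
    have hterm2 : star (H⁻¹ *ᵥ a) ⬝ᵥ a = star a ⬝ᵥ H⁻¹ *ᵥ a := by
      rw [star_mulVec, ← dotProduct_mulVec, hH.1.inv.eq]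
    rw [hHy, hstary, sub_dotProduct, dotProduct_sub, dotProduct_sub, hterm, hterm2]
    ring
  have hconj : (star x ⬝ᵥ a).re = (star a ⬝ᵥ x).re := by
    have : star x ⬝ᵥ a = star (star a ⬝ᵥ x) := by
      rw [star_dotProduct]
    rw [this, Complex.star_def, Complex.conj_re]
  have := h0
  rw [hexp] at this
  simp only [Complex.add_re, Complex.sub_re, hconj] at this
  linarith

theorem posDef_combo {n : ℕ} {G1 G2 : Matrix (Fin n) (Fin n) ℂ} (h1 : G1.PosDef)
    (h2 : G2.PosDef) {t s : ℝ} (ht : 0 ≤ t) (hs : 0 ≤ s) (hts : t + s = 1) :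
    (t • G1 + s • G2).PosDef := by
  rcases eq_or_lt_of_le ht with h | h
  · have hs1 : s = 1 := by linarith
    rw [← h, hs1]; simpa using h2
  · rcases eq_or_lt_of_le hs with h' | h'
    · have ht1 : t = 1 := by linarith
      rw [← h', ht1]; simpa using h1
    · exact (posDef_real_smul h h1).add (posDef_real_smul h' h2)

/-- The function `G ↦ aᴴ G⁻¹ a` is convex on the set of Hermitian positive
definite `n × n` complex matrices, for any fixed vector `a`. -/
theorem stmt4 {n : ℕ} (a : Fin n → ℂ) :
    ConvexOn ℝ
      {G : Matrix (Fin n) (Fin n) ℂ | G.PosDef}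
      (fun G => (star a ⬝ᵥ (G⁻¹ *ᵥ a)).re) := by
  refine ⟨fun G1 h1 G2 h2 t s ht hs hts => posDef_combo h1 h2 ht hs hts,
    fun G1 h1 G2 h2 t s ht hs hts => ?_⟩
  simp only [Set.mem_setOf_eq] at h1 h2
  have hG : (t • G1 + s • G2).PosDef := posDef_combo h1 h2 ht hs hts
  set G := t • G1 + s • G2 with hGdef
  set x := G⁻¹ *ᵥ a with hx
  have hGx : G *ᵥ x = a := by
    rw [hx, mulVec_mulVec, mul_nonsing_inv G (isUnit_iff_isUnit_det G |>.1 hG.isUnit),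
      one_mulVec]
  have hre1 : (star x ⬝ᵥ a).re = (star a ⬝ᵥ x).re := by
    have : star x ⬝ᵥ a = star (star a ⬝ᵥ x) := by rw [star_dotProduct]
    rw [this, Complex.star_def, Complex.conj_re]
  have hsplit : (star x ⬝ᵥ G *ᵥ x).re
      = t * (star x ⬝ᵥ G1 *ᵥ x).re + s * (star x ⬝ᵥ G2 *ᵥ x).re := by
    rw [hGdef]
    simp [add_mulVec, smul_mulVec, dotProduct_add, dotProduct_smul,
      Complex.real_smul, Complex.add_re, Complex.mul_re]
  have hval : (star a ⬝ᵥ G⁻¹ *ᵥ a).re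
      = 2 * (star a ⬝ᵥ x).re - (star x ⬝ᵥ G *ᵥ x).re := by
    rw [hGx, hre1, ← hx]; ring
  have key1 := key_ineq a x h1
  have key2 := key_ineq a x h2
  simp only [smul_eq_mul]
  rw [hval, hsplit]
  have hR : t * (2 * (star a ⬝ᵥ x).re) + s * (2 * (star a ⬝ᵥ x).re)
      = 2 * (star a ⬝ᵥ x).re := by rw [← add_mul, hts, one_mul]
  nlinarith [mul_le_mul_of_nonneg_left key1 ht, mul_le_mul_of_nonneg_left key2 hs, hR]
end

section
/- For Hermitian positive definite matrices G and G₀ and a fixed vector a, the first-order Taylor expansion bound holds: aᴴ G⁻¹ a ≥ aᴴ G₀⁻¹ a − aᴴ G₀⁻¹ (G − G₀) G₀⁻¹ a. -/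
open Matrix Complex
open scoped ComplexOrder

/-- SCA inequality (27): the first-order Taylor linearization of `G ↦ aᴴ G⁻¹ a`
around `G₀` is a global underestimator. -/
theorem stmt5 {n : ℕ} (G G₀ : Matrix (Fin n) (Fin n) ℂ)
    (hG : G.PosDef) (hG₀ : G₀.PosDef) (a : Fin n → ℂ) :
    (star a ⬝ᵥ (G₀⁻¹ *ᵥ a)).re
        - (star a ⬝ᵥ ((G₀⁻¹ * (G - G₀) * G₀⁻¹) *ᵥ a)).re
      ≤ (star a ⬝ᵥ (G⁻¹ *ᵥ a)).re := by
  set B := G₀⁻¹ - G⁻¹ with hB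
  have hBH : Bᴴ = B := by
    rw [hB, conjTranspose_sub, hG₀.isHermitian.inv.eq, hG.isHermitian.inv.eq]
  have hM : (B * G * Bᴴ).PosSemidef := hG.posSemidef.mul_mul_conjTranspose_same B
  have hGi : G * G⁻¹ = 1 := mul_nonsing_inv G hG.det_pos.ne'.isUnit
  have hGi' : G⁻¹ * G = 1 := nonsing_inv_mul G hG.det_pos.ne'.isUnit
  have key : B * G * Bᴴ = G⁻¹ - G₀⁻¹ + G₀⁻¹ * (G - G₀) * G₀⁻¹ := by
    rw [hBH, hB]
    have hG0i : G₀⁻¹ * G₀ = 1 := nonsing_inv_mul G₀ hG₀.det_pos.ne'.isUnit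
    have hG0i' : G₀ * G₀⁻¹ = 1 := mul_nonsing_inv G₀ hG₀.det_pos.ne'.isUnit
    noncomm_ring [hGi, hGi', hG0i, hG0i']
  have h0 : 0 ≤ (star a ⬝ᵥ ((B * G * Bᴴ) *ᵥ a)).re := hM.re_dotProduct_nonneg a
  rw [key, add_mulVec, sub_mulVec, dotProduct_add, dotProduct_sub] at h0
  simp only [Complex.add_re, Complex.sub_re] at h0
  linarith
end
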